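/- arXiv:1507.00240 — 5 statements merged into one kernel-verified Lean document; each statement's English description precedes it below -/
import Mathlib

section
/- Let (x,y,z) be random variables on a finite probability space. If x and z are conditionally independent given y (i.e., x → y → z), and x and y are independent conditioned on the event x ≠ y (i.e., x → {x≠y} → y), then x and z are independent conditioned on the event x ≠ y (i.e., x → {x≠y} → z). -/
open scoped Classical

/-- Probability of an event under a weight function on a finite sample space. -/
noncomputable def pr {Ω : Type*} [Fintype Ω] (μ : Ω → ℝ) (E : Ω → Prop) : ℝ :=
  ∑ ω, if E ω then μ ω else 0

section helpers

variable {Ω V : Type*} [Fintype Ω] (μ : Ω → ℝ)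

lemma pr_nonneg (hμ0 : ∀ ω, 0 ≤ μ ω) (E : Ω → Prop) : 0 ≤ pr μ E :=
  Finset.sum_nonneg fun ω _ => by by_cases h : E ω <;> simp [pr, h, hμ0 ω]

lemma pr_congr {E F : Ω → Prop} (h : ∀ ω, E ω ↔ F ω) : pr μ E = pr μ F :=
  Finset.sum_congr rfl fun ω _ => by simp only [h ω]

lemma pr_mono (hμ0 : ∀ ω, 0 ≤ μ ω) {E F : Ω → Prop} (h : ∀ ω, E ω → F ω) :
    pr μ E ≤ pr μ F :=
  Finset.sum_le_sum fun ω _ => by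
    by_cases hE : E ω
    · simp [hE, h ω hE]
    · by_cases hF : F ω <;> simp [hE, hF, hμ0 ω]

lemma pr_eq_zero (hμ0 : ∀ ω, 0 ≤ μ ω) {E F : Ω → Prop} (h : ∀ ω, E ω → F ω)
    (hF : pr μ F = 0) : pr μ E = 0 :=
  le_antisymm (hF ▸ pr_mono μ hμ0 h) (pr_nonneg μ hμ0 E)

lemma pr_of_not {E : Ω → Prop} (h : ∀ ω, ¬ E ω) : pr μ E = 0 := by
  simp [pr, h]

lemma pr_split (E F : Ω → Prop) :
    pr μ E = pr μ (fun ω => E ω ∧ F ω) + pr μ (fun ω => E ω ∧ ¬ F ω) := by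
  rw [pr, pr, pr, ← Finset.sum_add_distrib]
  refine Finset.sum_congr rfl fun ω _ => ?_
  by_cases hE : E ω <;> by_cases hF : F ω <;> simp [hE, hF]

lemma pr_decomp (E : Ω → Prop) (y : Ω → V) :
    pr μ E = ∑ y₀ ∈ Finset.univ.image y, pr μ (fun ω => E ω ∧ y ω = y₀) := by
  unfold pr
  rw [Finset.sum_comm]
  refine Finset.sum_congr rfl fun ω _ => ?_
  by_cases hE : E ω
  · simp only [hE, true_and]
    rw [Finset.sum_ite_eq (Finset.univ.image y) (y ω) (fun _ => μ ω)]
    simp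
  · simp [hE]

end helpers

theorem stmt4 {Ω V : Type*} [Fintype Ω]
    (μ : Ω → ℝ) (hμ0 : ∀ ω, 0 ≤ μ ω) (hμ1 : ∑ ω, μ ω = 1)
    (x y z : Ω → V)
    (hxyz : ∀ y₀ : V, 0 < pr μ (fun ω => y ω = y₀) → ∀ x₀ z₀ : V,
      pr μ (fun ω => x ω = x₀ ∧ z ω = z₀ ∧ y ω = y₀) * pr μ (fun ω => y ω = y₀)
        = pr μ (fun ω => x ω = x₀ ∧ y ω = y₀) * pr μ (fun ω => z ω = z₀ ∧ y ω = y₀))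
    (hΛ : 0 < pr μ (fun ω => x ω ≠ y ω))
    (hxy : ∀ x₀ y₀ : V,
      pr μ (fun ω => x ω = x₀ ∧ y ω = y₀ ∧ x ω ≠ y ω) * pr μ (fun ω => x ω ≠ y ω)
        = pr μ (fun ω => x ω = x₀ ∧ x ω ≠ y ω) * pr μ (fun ω => y ω = y₀ ∧ x ω ≠ y ω)) :
    ∀ x₀ z₀ : V,
      pr μ (fun ω => x ω = x₀ ∧ z ω = z₀ ∧ x ω ≠ y ω) * pr μ (fun ω => x ω ≠ y ω)
        = pr μ (fun ω => x ω = x₀ ∧ x ω ≠ y ω) * pr μ (fun ω => z ω = z₀ ∧ x ω ≠ y ω) := by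
  intro x₀ z₀
  set T := Finset.univ.image y with hT
  -- per-value key identity
  have key : ∀ y₀ : V,
      pr μ (fun ω => (x ω = x₀ ∧ z ω = z₀ ∧ x ω ≠ y ω) ∧ y ω = y₀)
        * pr μ (fun ω => x ω ≠ y ω)
      = pr μ (fun ω => x ω = x₀ ∧ x ω ≠ y ω)
        * pr μ (fun ω => (z ω = z₀ ∧ x ω ≠ y ω) ∧ y ω = y₀) := by
    intro y₀
    set p := pr μ (fun ω => y ω = y₀) with hp
    set B := pr μ (fun ω => x ω = x₀ ∧ x ω ≠ y ω) with hB
    set PΛ := pr μ (fun ω => x ω ≠ y ω) with hPΛ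
    have hpnn : 0 ≤ p := pr_nonneg μ hμ0 _
    rcases eq_or_lt_of_le hpnn with hp0 | hppos
    · -- p = 0 : both sides vanish
      have hA : pr μ (fun ω => (x ω = x₀ ∧ z ω = z₀ ∧ x ω ≠ y ω) ∧ y ω = y₀) = 0 :=
        pr_eq_zero μ hμ0 (fun ω h => h.2) hp0.symm
      have hC : pr μ (fun ω => (z ω = z₀ ∧ x ω ≠ y ω) ∧ y ω = y₀) = 0 :=
        pr_eq_zero μ hμ0 (fun ω h => h.2) hp0.symm
      rw [hA, hC]; ring
    · by_cases hxy0 : x₀ = y₀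
      · -- x₀ = y₀ : both sides vanish
        subst hxy0
        have hA : pr μ (fun ω => (x ω = x₀ ∧ z ω = z₀ ∧ x ω ≠ y ω) ∧ y ω = x₀) = 0 :=
          pr_of_not μ (fun ω h => h.1.2.2 (h.1.1.trans h.2.symm))
        have h0 : pr μ (fun ω => x ω = x₀ ∧ y ω = x₀ ∧ x ω ≠ y ω) = 0 :=
          pr_of_not μ (fun ω h => h.2.2 (h.1.trans h.2.1.symm))
        have hBD : B * pr μ (fun ω => y ω = x₀ ∧ x ω ≠ y ω) = 0 := by
          have := hxy x₀ x₀
          rw [h0, zero_mul] at this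
          exact this.symm
        have hC : B * pr μ (fun ω => (z ω = z₀ ∧ x ω ≠ y ω) ∧ y ω = x₀) = 0 := by
          rcases mul_eq_zero.1 hBD with hB0 | hD0
          · rw [hB0, zero_mul]
          · have : pr μ (fun ω => (z ω = z₀ ∧ x ω ≠ y ω) ∧ y ω = x₀) = 0 :=
              pr_eq_zero μ hμ0 (fun ω h => ⟨h.2, h.1.2⟩) hD0
            rw [this, mul_zero]
        rw [hA, zero_mul, hC]
      · -- x₀ ≠ y₀, p > 0
        set a := pr μ (fun ω => x ω = x₀ ∧ y ω = y₀) with ha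
        set c := pr μ (fun ω => z ω = z₀ ∧ y ω = y₀) with hc
        set D := pr μ (fun ω => y ω = y₀ ∧ x ω ≠ y ω) with hD
        -- A = pr(x=x₀ ∧ z=z₀ ∧ y=y₀)
        have hA : pr μ (fun ω => (x ω = x₀ ∧ z ω = z₀ ∧ x ω ≠ y ω) ∧ y ω = y₀)
            = pr μ (fun ω => x ω = x₀ ∧ z ω = z₀ ∧ y ω = y₀) := by
          refine pr_congr μ fun ω => ⟨fun h => ⟨h.1.1, h.1.2.1, h.2⟩, fun h =>
            ⟨⟨h.1, h.2.1, ?_⟩, h.2.2⟩⟩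
          rw [h.1, h.2.2]; exact hxy0
        have h1 : pr μ (fun ω => x ω = x₀ ∧ z ω = z₀ ∧ y ω = y₀) * p = a * c :=
          hxyz y₀ hppos x₀ z₀
        -- a * PΛ = B * D
        have h2 : a * PΛ = B * D := by
          have he : pr μ (fun ω => x ω = x₀ ∧ y ω = y₀ ∧ x ω ≠ y ω) = a := by
            refine pr_congr μ fun ω => ⟨fun h => ⟨h.1, h.2.1⟩, fun h => ⟨h.1, h.2, ?_⟩⟩
            rw [h.1, h.2]; exact hxy0
          have := hxy x₀ y₀
          rw [he] at this
          exact this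
        -- C * p = c * D
        have h3 : pr μ (fun ω => (z ω = z₀ ∧ x ω ≠ y ω) ∧ y ω = y₀) * p = c * D := by
          have e1 : c = pr μ (fun ω => (z ω = z₀ ∧ y ω = y₀) ∧ x ω = y₀)
              + pr μ (fun ω => (z ω = z₀ ∧ y ω = y₀) ∧ ¬ x ω = y₀) :=
            pr_split μ _ _
          have e2 : p = pr μ (fun ω => y ω = y₀ ∧ x ω = y₀)
              + pr μ (fun ω => y ω = y₀ ∧ ¬ x ω = y₀) :=
            pr_split μ _ _
          have e3 : pr μ (fun ω => (z ω = z₀ ∧ y ω = y₀) ∧ ¬ x ω = y₀)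
              = pr μ (fun ω => (z ω = z₀ ∧ x ω ≠ y ω) ∧ y ω = y₀) :=
            pr_congr μ fun ω => ⟨fun h => ⟨⟨h.1.1, fun hc' => h.2 (hc'.trans h.1.2)⟩,
              h.1.2⟩, fun h => ⟨⟨h.1.1, h.2⟩, fun hc' => h.1.2 (hc'.trans h.2.symm)⟩⟩
          have e4 : pr μ (fun ω => y ω = y₀ ∧ ¬ x ω = y₀) = D :=
            pr_congr μ fun ω => ⟨fun h => ⟨h.1, fun hc' => h.2 (hc'.trans h.1)⟩,
              fun h => ⟨h.1, fun hc' => h.2 (hc'.trans h.1.symm)⟩⟩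
          have e5 : pr μ (fun ω => (z ω = z₀ ∧ y ω = y₀) ∧ x ω = y₀) * p
              = pr μ (fun ω => y ω = y₀ ∧ x ω = y₀) * c := by
            have := hxyz y₀ hppos y₀ z₀
            have eq1 : pr μ (fun ω => x ω = y₀ ∧ z ω = z₀ ∧ y ω = y₀)
                = pr μ (fun ω => (z ω = z₀ ∧ y ω = y₀) ∧ x ω = y₀) :=
              pr_congr μ fun ω => ⟨fun h => ⟨⟨h.2.1, h.2.2⟩, h.1⟩, fun h => ⟨h.2, h.1.1, h.1.2⟩⟩
            have eq2 : pr μ (fun ω => x ω = y₀ ∧ y ω = y₀)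
                = pr μ (fun ω => y ω = y₀ ∧ x ω = y₀) :=
              pr_congr μ fun ω => ⟨fun h => ⟨h.2, h.1⟩, fun h => ⟨h.2, h.1⟩⟩
            rw [eq1, eq2] at this
            exact this
          -- combine: C*p = (c - pr(..∧x=y₀))*p = c*p - e*c = c*(p - e) = c*D
          have : pr μ (fun ω => (z ω = z₀ ∧ x ω ≠ y ω) ∧ y ω = y₀)
              = c - pr μ (fun ω => (z ω = z₀ ∧ y ω = y₀) ∧ x ω = y₀) := by
            rw [e1, e3]; ring
          rw [this]
          have hDval : D = p - pr μ (fun ω => y ω = y₀ ∧ x ω = y₀) := by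
            rw [e2, e4]; ring
          rw [hDval]
          nlinarith [e5]
        -- finish: A * PΛ = B * C, multiply by p²
        have hpne : p ≠ 0 := ne_of_gt hppos
        have hfin : (pr μ (fun ω => (x ω = x₀ ∧ z ω = z₀ ∧ x ω ≠ y ω) ∧ y ω = y₀) * PΛ)
            * (p * p)
            = (B * pr μ (fun ω => (z ω = z₀ ∧ x ω ≠ y ω) ∧ y ω = y₀)) * (p * p) := by
          rw [hA]
          calc pr μ (fun ω => x ω = x₀ ∧ z ω = z₀ ∧ y ω = y₀) * PΛ * (p * p)
              = (pr μ (fun ω => x ω = x₀ ∧ z ω = z₀ ∧ y ω = y₀) * p) * PΛ * p := by ring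
            _ = (a * c) * PΛ * p := by rw [h1]
            _ = (a * PΛ) * c * p := by ring
            _ = (B * D) * c * p := by rw [h2]
            _ = B * (pr μ (fun ω => (z ω = z₀ ∧ x ω ≠ y ω) ∧ y ω = y₀) * p) * p := by
                rw [h3]; ring
            _ = B * pr μ (fun ω => (z ω = z₀ ∧ x ω ≠ y ω) ∧ y ω = y₀) * (p * p) := by ring
        exact mul_right_cancel₀ (by positivity) hfin
  -- decompose both sides over y₀ ∈ T and sum the key identity
  rw [pr_decomp μ (fun ω => x ω = x₀ ∧ z ω = z₀ ∧ x ω ≠ y ω) y,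
    pr_decomp μ (fun ω => z ω = z₀ ∧ x ω ≠ y ω) y,
    Finset.sum_mul, Finset.mul_sum]
  exact Finset.sum_congr rfl fun y₀ _ => key y₀
end

section
/- Let q(b̂) be a distribution on {0,1}, and let p₀(b) and p₁(b) be distributions on {0,1,⊥} such that there exist couplings of q with p₀ and with p₁ satisfying p(b̂ ≠ b₀ ∧ b₀ ≠ ⊥) ≤ ε and p(b̂ ≠ b₁ ∧ b₁ ≠ ⊥) ≤ ε. Then p₀(b = 0) + p₁(b = 1) ≤ 1 + 2ε. -/
theorem stmt8 (ε : ℝ)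
    (q : Fin 2 → ℝ) (hq0 : ∀ i, 0 ≤ q i) (hq1 : ∑ i, q i = 1)
    (p₀ p₁ : Option (Fin 2) → ℝ)
    (hp₀0 : ∀ b, 0 ≤ p₀ b) (hp₀1 : ∑ b, p₀ b = 1)
    (hp₁0 : ∀ b, 0 ≤ p₁ b) (hp₁1 : ∑ b, p₁ b = 1)
    (J₀ J₁ : Fin 2 × Option (Fin 2) → ℝ)
    (hJ₀0 : ∀ z, 0 ≤ J₀ z) (hJ₁0 : ∀ z, 0 ≤ J₁ z)
    (hJ₀q : ∀ i, ∑ b, J₀ (i, b) = q i) (hJ₀p : ∀ b, ∑ i, J₀ (i, b) = p₀ b)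
    (hJ₁q : ∀ i, ∑ b, J₁ (i, b) = q i) (hJ₁p : ∀ b, ∑ i, J₁ (i, b) = p₁ b)
    (hbind₀ : J₀ (0, some 1) + J₀ (1, some 0) ≤ ε)
    (hbind₁ : J₁ (0, some 1) + J₁ (1, some 0) ≤ ε) :
    p₀ (some 0) + p₁ (some 1) ≤ 1 + 2 * ε := by
  have h1 := hJ₀p (some 0)
  have h2 := hJ₁p (some 1)
  have h3 := hJ₀q 0
  have h4 := hJ₁q 1
  have h5 := hq1
  simp [Fin.sum_univ_two, Fintype.sum_option] at h1 h2 h3 h4 h5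
  have := hJ₀0 (0, some 1)
  have := hJ₁0 (1, some 0)
  have := hJ₀0 (0, none)
  have := hJ₁0 (1, none)
  linarith
end

section
/- Let n ≥ 1 and consider deterministic strategies for the CHSH^n string commitment scheme over F_{2^n}: a function f : F_{2^n} → F_{2^n} (P's response) and constants y, y' ∈ F_{2^n} (two opening strategies). For any two distinct strings s₀, s₀' ∈ F_{2^n}, if a is uniform on F_{2^n} and the verifier outputs s with f(a) + y = a·s and s' with f(a) + y' = a·s', then the probability that simultaneously s = s₀ and s' = s₀' is at most 2^{−n}. -/
open Finset

theorem stmt14 {F : Type*} [Field F] [Fintype F] [DecidableEq F]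
    (n : ℕ) (hn : 1 ≤ n) (hcard : Fintype.card F = 2 ^ n)
    (f : F → F) (y y' s₀ s₀' : F) (hne : s₀ ≠ s₀') :
    ((Finset.univ.filter (fun a : F => f a + y = a * s₀ ∧ f a + y' = a * s₀')).card : ℝ)
        / (Fintype.card F : ℝ)
      ≤ 1 / (2 ^ n : ℝ) := by
  have hsub : s₀ - s₀' ≠ 0 := sub_ne_zero.mpr hne
  have hc : (Finset.univ.filter (fun a : F => f a + y = a * s₀ ∧ f a + y' = a * s₀')).card ≤ 1 := by
    apply Finset.card_le_one.mpr
    intro a ha b hb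
    simp only [Finset.mem_filter] at ha hb
    obtain ⟨-, ha1, ha2⟩ := ha
    obtain ⟨-, hb1, hb2⟩ := hb
    have h1 : a * (s₀ - s₀') = y - y' := by linear_combination ha2 - ha1
    have h2 : b * (s₀ - s₀') = y - y' := by linear_combination hb2 - hb1
    have := h1.trans h2.symm
    exact mul_right_cancel₀ hsub this
  rw [hcard]
  rw [div_le_div_iff₀ (by positivity) (by positivity)]
  push_cast
  nlinarith [pow_pos (by norm_num : (0:ℝ) < 2) n, (by exact_mod_cast hc : ((Finset.univ.filter (fun a : F => f a + y = a * s₀ ∧ f a + y' = a * s₀')).card : ℝ) ≤ 1)]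
end

section
/- Let s₀ be uniformly distributed on a finite set S of size M, and for each value s⁎ let p(s | s₀ = s⁎) be a conditional distribution of a random variable s with values in S ∪ {⊥}. Suppose there is a fixed distribution q(ŝ) on S such that for every s⁎, there is a coupling of q(ŝ) with p(s | s₀ = s⁎) satisfying p(s ≠ ŝ ∧ s = s⁎ | s₀ = s⁎) ≤ ε. Then p(s = s₀) ≤ ε + 1/M. -/
open Finset

theorem stmt17 {S : Type*} [Fintype S] [Nonempty S] [DecidableEq S] (ε : ℝ)
    (q : S → ℝ) (hq0 : ∀ t, 0 ≤ q t) (hq1 : ∑ t, q t = 1)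
    (p : S → Option S → ℝ)
    (hp0 : ∀ t b, 0 ≤ p t b) (hp1 : ∀ t, ∑ b, p t b = 1)
    (J : S → S × Option S → ℝ) (hJ0 : ∀ t z, 0 ≤ J t z)
    (hJq : ∀ t shat, ∑ b, J t (shat, b) = q shat)
    (hJp : ∀ t b, ∑ shat, J t (shat, b) = p t b)
    (hbind : ∀ t, ∑ shat ∈ Finset.univ.filter (fun shat => shat ≠ t), J t (shat, some t) ≤ ε) :
    (∑ t, p t (some t)) / (Fintype.card S : ℝ) ≤ ε + 1 / (Fintype.card S : ℝ) := by
  have hM : (0:ℝ) < (Fintype.card S : ℝ) := by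
    exact_mod_cast Fintype.card_pos
  have key : ∀ t : S, p t (some t) ≤ q t + ε := by
    intro t
    have h1 : p t (some t) = J t (t, some t) +
        ∑ shat ∈ Finset.univ.filter (fun shat => shat ≠ t), J t (shat, some t) := by
      rw [← hJp t (some t), ← Finset.sum_filter_add_sum_filter_not Finset.univ (fun shat => shat = t)]
      congr 1
      rw [Finset.filter_eq', if_pos (Finset.mem_univ t), Finset.sum_singleton]
    have h2 : J t (t, some t) ≤ q t := by
      rw [← hJq t t]
      exact Finset.single_le_sum (fun b _ => hJ0 t (t, b)) (Finset.mem_univ (some t))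
    calc p t (some t) = _ := h1
      _ ≤ q t + ε := add_le_add h2 (hbind t)
  have hsum : ∑ t, p t (some t) ≤ 1 + (Fintype.card S : ℝ) * ε := by
    calc ∑ t, p t (some t) ≤ ∑ t, (q t + ε) := Finset.sum_le_sum (fun t _ => key t)
      _ = 1 + (Fintype.card S : ℝ) * ε := by
        rw [Finset.sum_add_distrib, hq1, Finset.sum_const, nsmul_eq_mul, Finset.card_univ]
  rw [div_le_iff₀ hM]
  calc ∑ t, p t (some t) ≤ 1 + (Fintype.card S : ℝ) * ε := hsum
    _ = (ε + 1 / (Fintype.card S : ℝ)) * (Fintype.card S : ℝ) := by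
      field_simp; ring
end

section
/- Let X', Y' : F_q → F_q be functions maximizing P_{a,s uniform}[X'(a) + Y'(s) = a·s] =: q_n over all pairs of functions. Define X(a, (r_a, r_s)) = X'(a + r_a) − a·r_s − r_a·r_s and Y(s, (r_a, r_s)) = Y'(s + r_s) − r_a·s. Then for every fixed a, s ∈ F_q, the probability over uniform (r_a, r_s) ∈ F_q × F_q that X(a,(r_a,r_s)) + Y(s,(r_a,r_s)) = a·s equals q_n. -/
open Finset

theorem stmt18 {F : Type*} [Field F] [Fintype F] [DecidableEq F]
    (X' Y' : F → F)
    (hmax : ∀ X Y : F → F,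
      ((Finset.univ.filter (fun z : F × F => X z.1 + Y z.2 = z.1 * z.2)).card : ℝ)
        ≤ ((Finset.univ.filter (fun z : F × F => X' z.1 + Y' z.2 = z.1 * z.2)).card : ℝ))
    (a s : F) :
    ((Finset.univ.filter (fun r : F × F =>
        (X' (a + r.1) - a * r.2 - r.1 * r.2) + (Y' (s + r.2) - r.1 * s) = a * s)).card : ℝ)
        / ((Fintype.card F : ℝ) ^ 2)
      = ((Finset.univ.filter (fun z : F × F => X' z.1 + Y' z.2 = z.1 * z.2)).card : ℝ)
        / ((Fintype.card F : ℝ) ^ 2) := by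
  congr 1
  norm_cast
  apply Finset.card_bij' (fun r _ => ((a + r.1, s + r.2) : F × F))
    (fun z _ => ((z.1 - a, z.2 - s) : F × F))
  · intro r hr
    simp only [mem_filter, mem_univ, true_and] at hr ⊢
    linear_combination hr
  · intro z hz
    simp only [mem_filter, mem_univ, true_and] at hz ⊢
    have h1 : a + (z.1 - a) = z.1 := by ring
    have h2 : s + (z.2 - s) = z.2 := by ring
    rw [h1, h2]
    linear_combination hz
  · intro r _; simp
  · intro z _; simp
end
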